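/- The kernel of ψ contains yH ∗ yH: for all u, v ∈ yH, ψ(u ∗ v) = 0. -/

import Mathlib

open scoped BigOperators

/-- `H¹`: the ℚ-vector space with basis the words `z_{k₁}⋯z_{k_r}` in the letters
`z_k` (`k` a positive integer), encoded as finitely supported functions on lists. -/
abbrev H1 : Type := List ℕ+ →₀ ℚ

/-- The basis word `z_{k₁}⋯z_{k_r}` of `H¹` (the empty list is the unit `1`). -/
noncomputable def W (l : List ℕ+) : H1 := Finsupp.single l 1

/-- Left multiplication by the letter `z_k` (linear extension of `w ↦ z_k w`). -/
noncomputable def consL (k : ℕ+) (h : H1) : H1 := Finsupp.mapDomain (fun w => k :: w) h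

/-- Right multiplication by the letter `z_k` (linear extension of `w ↦ w z_k`). -/
noncomputable def mulRk (k : ℕ+) (h : H1) : H1 := Finsupp.mapDomain (fun w => w ++ [k]) h

/-- The harmonic (stuffle) product on words:
`1 ∗ u = u ∗ 1 = u`, `z_k u ∗ z_l v = z_k(u ∗ z_l v) + z_l(z_k u ∗ v) + z_{k+l}(u ∗ v)`. -/
noncomputable def harmW : List ℕ+ → List ℕ+ → H1
  | [], v => W v
  | u, [] => W u
  | k :: u, l :: v =>
      consL k (harmW u (l :: v)) + consL l (harmW (k :: u) v) + consL (k + l) (harmW u v)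
  termination_by u v => u.length + v.length

/-- The harmonic product `∗` on `H¹`, as the ℚ-bilinear extension of `harmW`. -/
noncomputable def harm (g h : H1) : H1 :=
  g.sum fun u c => h.sum fun v d => (c * d) • harmW u v

/-- The product `ш̃` on words in the letters `z_k`:
`1 ш̃ u = u ш̃ 1 = u`, `z_k u ш̃ z_l v = z_k(u ш̃ z_l v) + z_l(z_k u ш̃ v)`. -/
noncomputable def shtW : List ℕ+ → List ℕ+ → H1
  | [], v => W v
  | u, [] => W u
  | k :: u, l :: v => consL k (shtW u (l :: v)) + consL l (shtW (k :: u) v)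
  termination_by u v => u.length + v.length

/-- The shuffle product `ш̃` on `H¹` (on the alphabet `z₁, z₂, …`), bilinear extension. -/
noncomputable def sht (g h : H1) : H1 :=
  g.sum fun u c => h.sum fun v d => (c * d) • shtW u v

/-- Addition of a natural number to a positive natural number. -/
def pplus (k : ℕ+) (e : ℕ) : ℕ+ := ⟨(k : ℕ) + e, by have := k.pos; omega⟩

/-- `σ_m` on words: `σ_m(z_{k₁}⋯z_{k_r}) = Σ_{e₁+⋯+e_r=m} ∏_j C(k_j+e_j-1, e_j) z_{k₁+e₁}⋯z_{k_r+e_r}`,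
which is the word formula for `σ_m(1) = δ_{m,0}`, `σ_m(yw) = y(w ш x^m)`. -/
noncomputable def sigW : ℕ → List ℕ+ → H1
  | m, [] => if m = 0 then W [] else 0
  | m, k :: ks => ∑ e ∈ Finset.range (m + 1),
      ((((k : ℕ) + e - 1).choose e : ℚ)) • consL (pplus k e) (sigW (m - e) ks)
  termination_by m ks => ks.length

/-- `σ_m : H¹ → H¹`, linear extension. -/
noncomputable def sig (m : ℕ) (h : H1) : H1 := h.sum fun ks c => c • sigW m ks

/-- `S` on words: the word formula for `S(1) = 1`, `S(yw) = y S₁(w)` where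
`S₁(x) = x`, `S₁(y) = x + y`; explicitly `S(z_{k₁}⋯z_{k_r})` is the sum over all ways of
replacing separating commas by `+`. -/
noncomputable def StW : List ℕ+ → H1
  | [] => W []
  | [k] => W [k]
  | k :: l :: ks => consL k (StW (l :: ks)) + StW ((k + l) :: ks)
  termination_by ks => ks.length

/-- `S : H¹ → H¹`, linear extension. -/
noncomputable def St (h : H1) : H1 := h.sum fun ks c => c • StW ks

/-- `S̃ = S ∘ d` on words, where `d(x) = x`, `d(y) = -y`, so `d` multiplies a word of
depth `r` by `(-1)^r`. -/
noncomputable def SttW (ks : List ℕ+) : H1 := ((-1 : ℚ)) ^ ks.length • StW ks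

/-- `S̃ = S ∘ d : H¹ → H¹`, linear extension. -/
noncomputable def Stt (h : H1) : H1 := h.sum fun ks c => c • SttW ks

/-- `ψ` on words: `ψ(z_{k₁}⋯z_{k_r}) = Σ_{i=0}^{r-1} z_{k₁}⋯z_{k_i} ∗ S̃(σ₁(z_{k_r}⋯z_{k_{i+1}}))`. -/
noncomputable def psiW (ks : List ℕ+) : H1 :=
  ∑ i ∈ Finset.range ks.length, harm (W (ks.take i)) (Stt (sigW 1 ((ks.drop i).reverse)))

/-- `ψ : yH → H¹`, linear extension. -/
noncomputable def psi (h : H1) : H1 := h.sum fun ks c => c • psiW ks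

/-- `ψ̄` on words: `ψ̄(z_{k₁}⋯z_{k_r}) = Σ_{i=0}^{r-1} (-1)^{r-i} z_{k₁}⋯z_{k_i} ш̃ σ₁(z_{k_r}⋯z_{k_{i+1}})`. -/
noncomputable def psibW (ks : List ℕ+) : H1 :=
  ∑ i ∈ Finset.range ks.length,
    ((-1 : ℚ)) ^ (ks.length - i) • sht (W (ks.take i)) (sigW 1 ((ks.drop i).reverse))

/-- `ψ̄ : yH → H¹`, linear extension. -/
noncomputable def psib (h : H1) : H1 := h.sum fun ks c => c • psibW ks

/-- `ρ` on words:
`ρ(z_{k₁}⋯z_{k_r}) = Σ_{i=1}^{r} (-1)^{r-i} (z_{k₁}⋯z_{k_{i-1}} ш̃ z_{k_r}⋯z_{k_{i+1}}) z_{k_i}`. -/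
noncomputable def rhoW (ks : List ℕ+) : H1 :=
  ∑ i : Fin ks.length, ((-1 : ℚ)) ^ (ks.length - 1 - (i : ℕ)) •
    mulRk (ks.get i) (sht (W (ks.take (i : ℕ))) (W ((ks.drop ((i : ℕ) + 1)).reverse)))

/-- `ρ : yH → yH`, linear extension. -/
noncomputable def rho (h : H1) : H1 := h.sum fun ks c => c • rhoW ks

/-- `yH ⊆ H¹`: the span of the nonempty words `z_{k₁}⋯z_{k_r}` (`r ≥ 1`). -/
noncomputable def yH1 : Submodule ℚ H1 := Submodule.span ℚ {h | ∃ k ks, h = W (k :: ks)}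

/-- `yH ∗ yH`: the ℚ-span of the harmonic products `w₁ ∗ w₂` with `w₁, w₂ ∈ yH`. -/
noncomputable def harmSpan : Submodule ℚ H1 :=
  Submodule.span ℚ {h | ∃ u ∈ yH1, ∃ v ∈ yH1, h = harm u v}

/-- `yH ш̃ yH`: the ℚ-span of the products `w₁ ш̃ w₂` with `w₁, w₂ ∈ yH`. -/
noncomputable def shtSpan : Submodule ℚ H1 :=
  Submodule.span ℚ {h | ∃ u ∈ yH1, ∃ v ∈ yH1, h = sht u v}


/-!
`(H¹, ∗)` with the deconcatenation coproduct `Δ` is Hoffman's quasi-shuffle Hopf algebra: `Δ` is a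
`∗`-homomorphism, and its antipode is `A(w) = S̃(w reversed)`, which (the algebra being commutative)
is again a `∗`-homomorphism. Moreover `σ₁` is a derivation of `∗`, and `ψ` is the convolution
`id ⋆ (A ∘ σ₁)`. Combining these, `ψ(u ∗ v) = ψ(u) ε(v) + ε(u) ψ(v)`, which vanishes when `u` and
`v` have positive depth.
-/

open Finsupp (linearCombination)

local infixl:70 " ∗ " => harm

lemma single_eq_smul_W (w : List ℕ+) (c : ℚ) : Finsupp.single w c = c • W w := by
  simp [W]

@[simp] lemma linearCombination_W {M : Type*} [AddCommMonoid M] [Module ℚ M] (F : List ℕ+ → M)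
    (w : List ℕ+) :
    linearCombination ℚ F (W w) = F w := by
  simp [W]

theorem H1.induction_on {P : H1 → Prop} (g : H1) (zero : P 0)
    (add : ∀ g h, P g → P h → P (g + h)) (smul_W : ∀ (c : ℚ) w, P (c • W w)) : P g :=
  Finsupp.induction_linear g zero add fun w c => single_eq_smul_W w c ▸ smul_W c w

lemma H1.linearMap_ext {M : Type*} [AddCommMonoid M] [Module ℚ M] {f g : H1 →ₗ[ℚ] M}
    (h : ∀ w, f (W w) = g (W w)) : f = g :=
  Finsupp.lhom_ext fun w c => by rw [single_eq_smul_W, map_smul, map_smul, h]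

noncomputable def consLₗ (k : ℕ+) : H1 →ₗ[ℚ] H1 := Finsupp.lmapDomain ℚ ℚ (k :: ·)

@[simp] lemma consLₗ_apply (k : ℕ+) (h : H1) : consLₗ k h = consL k h := rfl

@[simp] lemma consL_W (k : ℕ+) (w : List ℕ+) : consL k (W w) = W (k :: w) := by
  simp [consL, W, Finsupp.mapDomain_single]

@[simp] lemma consL_zero (k : ℕ+) : consL k 0 = 0 := by simp [← consLₗ_apply]
@[simp] lemma consL_add (k : ℕ+) (g h : H1) : consL k (g + h) = consL k g + consL k h := by
  simp [← consLₗ_apply]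
@[simp] lemma consL_neg (k : ℕ+) (h : H1) : consL k (-h) = -consL k h := by simp [← consLₗ_apply]
@[simp] lemma consL_smul (k : ℕ+) (c : ℚ) (h : H1) : consL k (c • h) = c • consL k h := by
  simp [← consLₗ_apply]
lemma consL_sum {α : Type*} (k : ℕ+) (s : Finset α) (f : α → H1) :
    consL k (∑ i ∈ s, f i) = ∑ i ∈ s, consL k (f i) := by
  simp [← consLₗ_apply]

lemma linearCombination_consL (F : List ℕ+ → H1) (k : ℕ+) (h : H1) :
    linearCombination ℚ F (consL k h) = linearCombination ℚ (fun w => F (k :: w)) h := by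
  rw [consL, Finsupp.linearCombination_mapDomain]; rfl

noncomputable def harmₗ : H1 →ₗ[ℚ] H1 →ₗ[ℚ] H1 :=
  linearCombination ℚ fun u => linearCombination ℚ (harmW u)

lemma harm_eq_harmₗ (g h : H1) : g ∗ h = harmₗ g h := by
  simp only [harm, harmₗ, Finsupp.linearCombination_apply, LinearMap.finsupp_sum_apply,
    LinearMap.smul_apply, Finsupp.smul_sum, mul_smul]

@[simp] lemma harm_W_W (u v : List ℕ+) : W u ∗ W v = harmW u v := by
  simp [harm_eq_harmₗ, harmₗ]
@[simp] lemma harm_zero_left (h : H1) : 0 ∗ h = 0 := by simp [harm_eq_harmₗ]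
@[simp] lemma harm_zero_right (g : H1) : g ∗ 0 = 0 := by simp [harm_eq_harmₗ]
@[simp] lemma harm_add_left (g g' h : H1) : (g + g') ∗ h = g ∗ h + g' ∗ h := by
  simp [harm_eq_harmₗ]
@[simp] lemma harm_add_right (g h h' : H1) : g ∗ (h + h') = g ∗ h + g ∗ h' := by
  simp [harm_eq_harmₗ]
@[simp] lemma harm_sub_right (g h h' : H1) : g ∗ (h - h') = g ∗ h - g ∗ h' := by
  simp [harm_eq_harmₗ]
@[simp] lemma harm_neg_right (g h : H1) : g ∗ -h = -(g ∗ h) := by simp [harm_eq_harmₗ]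
@[simp] lemma harm_smul_left (c : ℚ) (g h : H1) : (c • g) ∗ h = c • (g ∗ h) := by
  simp [harm_eq_harmₗ]
@[simp] lemma harm_smul_right (c : ℚ) (g h : H1) : g ∗ (c • h) = c • (g ∗ h) := by
  simp [harm_eq_harmₗ]
lemma harm_sum_left {α : Type*} (s : Finset α) (f : α → H1) (h : H1) :
    (∑ i ∈ s, f i) ∗ h = ∑ i ∈ s, f i ∗ h := by
  simp [harm_eq_harmₗ]
lemma harm_sum_right {α : Type*} (s : Finset α) (g : H1) (f : α → H1) :
    g ∗ ∑ i ∈ s, f i = ∑ i ∈ s, g ∗ f i := by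
  simp [harm_eq_harmₗ]

lemma harmW_nil_left (v : List ℕ+) : harmW [] v = W v := by rw [harmW]

lemma harmW_nil_right (u : List ℕ+) : harmW u [] = W u := by
  cases u <;> rw [harmW.eq_def]

lemma harmW_cons_cons (k l : ℕ+) (u v : List ℕ+) :
    harmW (k :: u) (l :: v) =
      consL k (harmW u (l :: v)) + consL l (harmW (k :: u) v) + consL (k + l) (harmW u v) := by
  rw [harmW]

@[simp] lemma harm_nil_left (h : H1) : W [] ∗ h = h := by
  induction h using H1.induction_on <;> simp_all [harmW_nil_left]

@[simp] lemma harm_nil_right (g : H1) : g ∗ W [] = g := by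
  induction g using H1.induction_on <;> simp_all [harmW_nil_right]

lemma harm_consL_consL (a b : ℕ+) (g h : H1) :
    consL a g ∗ consL b h =
      consL a (g ∗ consL b h) + consL b (consL a g ∗ h) + consL (a + b) (g ∗ h) := by
  induction g using H1.induction_on with
  | zero => simp
  | add g g' hg hg' => simp only [consL_add, harm_add_left, hg, hg']; abel
  | smul_W c u =>
    induction h using H1.induction_on with
    | zero => simp
    | add h h' hh hh' => simp only [consL_add, harm_add_right, hh, hh']; abel
    | smul_W d v => simp [harmW_cons_cons, smul_add]

lemma consL_harm_W_cons (a b : ℕ+) (g : H1) (v : List ℕ+) :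
    consL a g ∗ W (b :: v) =
      consL a (g ∗ W (b :: v)) + consL b (consL a g ∗ W v) + consL (a + b) (g ∗ W v) := by
  rw [← consL_W b v, harm_consL_consL]

lemma W_cons_harm_consL (a b : ℕ+) (u : List ℕ+) (h : H1) :
    W (a :: u) ∗ consL b h =
      consL a (W u ∗ consL b h) + consL b (W (a :: u) ∗ h) + consL (a + b) (W u ∗ h) := by
  rw [← consL_W a u, harm_consL_consL]

theorem harmW_comm : ∀ u v : List ℕ+, harmW u v = harmW v u
  | [], v => by rw [harmW_nil_left, harmW_nil_right]
  | _ :: _, [] => by rw [harmW_nil_left, harmW_nil_right]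
  | k :: u, l :: v => by
    rw [harmW_cons_cons, harmW_cons_cons, harmW_comm u (l :: v), harmW_comm (k :: u) v,
      harmW_comm u v, add_comm k l]
    abel
  termination_by u v => u.length + v.length

lemma harm_comm (g h : H1) : g ∗ h = h ∗ g := by
  induction g using H1.induction_on with
  | zero => simp
  | add g g' hg hg' => simp [hg, hg']
  | smul_W c u =>
    induction h using H1.induction_on with
    | zero => simp
    | add h h' hh hh' => simp [hh, hh']
    | smul_W d v => simp [harmW_comm u v, smul_comm c d]

theorem harmW_harm_W : ∀ u v w : List ℕ+, harmW u v ∗ W w = W u ∗ harmW v w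
  | [], v, w => by simp [harmW_nil_left]
  | _ :: _, [], w => by simp [harmW_nil_left, harmW_nil_right]
  | _ :: _, _ :: _, [] => by simp [harmW_nil_right]
  | a :: u, b :: v, c :: w => by
    -- after expanding both sides, the `consL c`-terms on the left and the `consL a`-terms on
    -- the right each regroup into a single quasi-shuffle
    have hc : consL c (consL a (harmW u (b :: v)) ∗ W w) +
        consL c (consL b (harmW (a :: u) v) ∗ W w) + consL c (consL (a + b) (harmW u v) ∗ W w) =
        consL c (W (a :: u) ∗ harmW (b :: v) w) := by
      rw [← consL_add, ← consL_add, ← harm_add_left, ← harm_add_left, ← harmW_cons_cons,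
        harmW_harm_W (a :: u) (b :: v) w]
    have ha : consL a (W u ∗ consL b (harmW v (c :: w))) +
        consL a (W u ∗ consL c (harmW (b :: v) w)) + consL a (W u ∗ consL (b + c) (harmW v w)) =
        consL a (W u ∗ harmW (b :: v) (c :: w)) := by
      rw [← consL_add, ← consL_add, ← harm_add_right, ← harm_add_right, ← harmW_cons_cons]
    rw [harmW_cons_cons a b, harm_add_left, harm_add_left, consL_harm_W_cons, consL_harm_W_cons,
      consL_harm_W_cons, harmW_cons_cons b c, harm_add_right, harm_add_right, W_cons_harm_consL,
      W_cons_harm_consL, W_cons_harm_consL, harmW_harm_W u (b :: v) (c :: w),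
      harmW_harm_W (a :: u) v (c :: w), harmW_harm_W u v (c :: w), harmW_harm_W u (b :: v) w,
      harmW_harm_W (a :: u) v w, harmW_harm_W u v w, add_assoc a b c]
    linear_combination (norm := abel) hc - ha
  termination_by u v w => u.length + v.length + w.length

lemma harm_assoc (g h e : H1) : g ∗ h ∗ e = g ∗ (h ∗ e) := by
  induction g using H1.induction_on with
  | zero => simp
  | add g g' hg hg' => simp [hg, hg']
  | smul_W c u =>
    induction h using H1.induction_on with
    | zero => simp
    | add h h' hh hh' => simp only [harm_add_left, harm_add_right, hh, hh']
    | smul_W d v =>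
      induction e using H1.induction_on with
      | zero => simp
      | add e e' he he' => simp only [harm_add_right, he, he']
      | smul_W c' w => simp [harmW_harm_W]

lemma harm_harm_harm_comm (a b c d : H1) : a ∗ b ∗ (c ∗ d) = a ∗ c ∗ (b ∗ d) := by
  rw [harm_assoc, harm_assoc, ← harm_assoc b, harm_comm b c, harm_assoc c]

/-- The convolution `f ⋆ g = ∗ ∘ (f ⊗ g) ∘ Δ`, with `Δ` the deconcatenation coproduct. -/
noncomputable def convW (f g : H1 →ₗ[ℚ] H1) (w : List ℕ+) : H1 :=
  ∑ i ∈ Finset.range (w.length + 1), f (W (w.take i)) ∗ g (W (w.drop i))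

noncomputable def conv (f g : H1 →ₗ[ℚ] H1) : H1 →ₗ[ℚ] H1 := linearCombination ℚ (convW f g)

@[simp] lemma conv_W (f g : H1 →ₗ[ℚ] H1) (w : List ℕ+) : conv f g (W w) = convW f g w :=
  linearCombination_W _ w

lemma convW_cons (f g : H1 →ₗ[ℚ] H1) (a : ℕ+) (v : List ℕ+) :
    convW f g (a :: v) = f (W []) ∗ g (W (a :: v)) +
      ∑ i ∈ Finset.range (v.length + 1), f (W (a :: v.take i)) ∗ g (W (v.drop i)) := by
  rw [convW, List.length_cons, Finset.sum_range_succ', add_comm]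
  simp

lemma convW_concat (f g : H1 →ₗ[ℚ] H1) (v : List ℕ+) (k : ℕ+) :
    convW f g (v ++ [k]) =
      ∑ i ∈ Finset.range (v.length + 1), f (W (v.take i)) ∗ g (W (v.drop i ++ [k])) +
        f (W (v ++ [k])) ∗ g (W []) := by
  rw [convW, List.length_append, List.length_singleton, Finset.sum_range_succ]
  congr 1
  · refine Finset.sum_congr rfl fun i hi => ?_
    have hi : i ≤ v.length := Nat.lt_succ_iff.mp (Finset.mem_range.mp hi)
    rw [List.take_append_of_le_length hi, List.drop_append_of_le_length hi]
  · rw [← List.length_singleton (a := k), ← List.length_append, List.take_length,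
      List.drop_length]

lemma conv_consL (f g : H1 →ₗ[ℚ] H1) (k : ℕ+) (h : H1) :
    conv f g (consL k h) = f (W []) ∗ g (consL k h) + conv (f ∘ₗ consLₗ k) g h := by
  induction h using H1.induction_on with
  | zero => simp
  | add h h' hh hh' => simp only [consL_add, map_add, harm_add_right, hh, hh']; abel
  | smul_W c w =>
    simp only [consL_smul, consL_W, map_smul, conv_W, convW_cons, smul_add]
    simp [convW]

/-- `Δ` is a `∗`-homomorphism. -/
theorem conv_harmW : ∀ (u v : List ℕ+) (f g : H1 →ₗ[ℚ] H1),
    conv f g (harmW u v) =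
      ∑ i ∈ Finset.range (u.length + 1), ∑ j ∈ Finset.range (v.length + 1),
        f (harmW (u.take i) (v.take j)) ∗ g (harmW (u.drop i) (v.drop j))
  | [], v, f, g => by simp [convW, harmW_nil_left]
  | _ :: _, [], f, g => by simp [convW, harmW_nil_right]
  | a :: u, b :: v, f, g => by
    rw [harmW_cons_cons, map_add, map_add, conv_consL, conv_consL, conv_consL,
      conv_harmW u (b :: v), conv_harmW (a :: u) v, conv_harmW u v]
    simp only [List.length_cons, Finset.sum_range_succ', List.take_succ_cons, List.drop_succ_cons,
      List.take_zero, List.drop_zero, harmW_nil_left, harmW_nil_right, harmW_cons_cons, map_add,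
      harm_add_left, harm_add_right, Finset.sum_add_distrib, LinearMap.comp_apply,
      consLₗ_apply, consL_W]
    abel
  termination_by u v => u.length + v.length

noncomputable def counitW (w : List ℕ+) : H1 := if w = [] then W [] else 0

noncomputable def counit : H1 →ₗ[ℚ] H1 := linearCombination ℚ counitW

@[simp] lemma counit_W (w : List ℕ+) : counit (W w) = counitW w := linearCombination_W _ w

@[simp] lemma counitW_nil : counitW [] = W [] := if_pos rfl

@[simp] lemma counitW_cons (k : ℕ+) (w : List ℕ+) : counitW (k :: w) = 0 :=
  if_neg (List.cons_ne_nil k w)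

lemma counit_consL (k : ℕ+) (h : H1) : counit (consL k h) = 0 := by
  rw [counit, linearCombination_consL]
  simp [Finsupp.linearCombination_apply]

lemma counit_harmW : ∀ u v : List ℕ+, counit (harmW u v) = counitW u ∗ counitW v
  | [], v => by simp [harmW_nil_left]
  | _ :: _, [] => by simp [harmW_nil_right]
  | _ :: _, _ :: _ => by simp [harmW_cons_cons, counit_consL]

/-- Hoffman's antipode of the quasi-shuffle Hopf algebra `(H¹, ∗, Δ)`, `Δ` deconcatenation. -/
noncomputable def antipodeW (w : List ℕ+) : H1 := SttW w.reverse

noncomputable def antipode : H1 →ₗ[ℚ] H1 := linearCombination ℚ antipodeW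

@[simp] lemma antipode_W (w : List ℕ+) : antipode (W w) = antipodeW w := linearCombination_W _ w

noncomputable def bumpLast (k : ℕ+) : List ℕ+ → H1
  | [] => 0
  | [m] => W [m + k]
  | a :: b :: v => consL a (bumpLast k (b :: v))

lemma bumpLast_concat (k : ℕ+) : ∀ (v : List ℕ+) (m : ℕ+), bumpLast k (v ++ [m]) = W (v ++ [m + k])
  | [], _ => rfl
  | [_], _ => by simp [bumpLast]
  | a :: b :: v, m => by
    rw [List.cons_append, List.cons_append, bumpLast, ← List.cons_append, bumpLast_concat]
    simp

lemma bumpLast_cons (k a : ℕ+) (v : List ℕ+) :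
    bumpLast k (a :: v) = consL a (bumpLast k v) + consL (a + k) (counitW v) := by
  cases v <;> simp [bumpLast]

lemma SttW_cons_cons (k m : ℕ+) (t : List ℕ+) :
    SttW (k :: m :: t) = -consL k (SttW (m :: t)) - SttW ((k + m) :: t) := by
  simp only [SttW, StW, List.length_cons, smul_add, consL_smul, pow_succ]
  module

lemma antipodeW_nil : antipodeW [] = W [] := by simp [antipodeW, SttW, StW]

lemma antipodeW_concat (w : List ℕ+) (k : ℕ+) :
    antipodeW (w ++ [k]) = -consL k (antipodeW w) - antipode (bumpLast k w) := by
  rcases w.eq_nil_or_concat' with rfl | ⟨v, m, rfl⟩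
  · simp [antipodeW, SttW, StW, bumpLast]
  · simp [antipodeW, bumpLast_concat, SttW_cons_cons, add_comm m k]

lemma conv_bumpLast (f g : H1 →ₗ[ℚ] H1) (k : ℕ+) (v : List ℕ+) :
    conv f g (bumpLast k v) =
      ∑ i ∈ Finset.range (v.length + 1), f (W (v.take i)) ∗ g (bumpLast k (v.drop i)) +
        f (bumpLast k v) ∗ g (W []) := by
  rcases v.eq_nil_or_concat' with rfl | ⟨v, m, rfl⟩
  · simp [bumpLast]
  rw [bumpLast_concat, conv_W, convW_concat, List.length_append,
    List.length_singleton, Finset.sum_range_succ _ (v.length + 1),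
    List.drop_eq_nil_of_le (by simp), bumpLast, map_zero, harm_zero_right, add_zero]
  congr 1
  refine Finset.sum_congr rfl fun i hi => ?_
  have hi : i ≤ v.length := Nat.lt_succ_iff.mp (Finset.mem_range.mp hi)
  rw [List.take_append_of_le_length hi, List.drop_append_of_le_length hi, bumpLast_concat]

lemma convW_consL_antipode (k : ℕ+) {n : ℕ}
    (hR : ∀ w : List ℕ+, w.length ≤ n → convW LinearMap.id antipode w = counitW w) :
    ∀ v : List ℕ+, v.length ≤ n →
      convW LinearMap.id (consLₗ k ∘ₗ antipode) v = W (v ++ [k]) + bumpLast k v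
  | [], _ => by simp [convW, antipodeW_nil, bumpLast, harmW_nil_left]
  | a :: v, hv => by
    have hv' : v.length ≤ n := by rw [List.length_cons] at hv; omega
    have hv₀ := hR v hv'
    have hav := hR (a :: v) hv
    have ih := convW_consL_antipode k hR v hv'
    rw [convW_cons, counitW_cons, LinearMap.id_apply, harm_nil_left,
      ← eq_neg_iff_add_eq_zero] at hav
    rw [convW] at hv₀ ih
    simp only [LinearMap.id_apply, LinearMap.comp_apply, consLₗ_apply] at hv₀ ih
    simp only [convW_cons, LinearMap.id_apply, LinearMap.comp_apply, consLₗ_apply, harm_nil_left,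
      W_cons_harm_consL, Finset.sum_add_distrib, ← consL_sum, hav, ih, hv₀, bumpLast_cons]
    simp only [consL_add, consL_neg, consL_W, List.cons_append]
    abel

theorem convW_id_antipode (w : List ℕ+) : convW LinearMap.id antipode w = counitW w := by
  suffices ∀ n, ∀ w : List ℕ+, w.length ≤ n → convW LinearMap.id antipode w = counitW w from
    this _ w le_rfl
  intro n
  induction n with
  | zero =>
    intro w hw
    simp [List.length_eq_zero_iff.mp (Nat.le_zero.mp hw), convW, antipodeW_nil]
  | succ n ih =>
    intro w hw
    rcases w.eq_nil_or_concat' with rfl | ⟨v, k, rfl⟩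
    · simp [convW, antipodeW_nil]
    have hv : v.length ≤ n := by
      rw [List.length_append, List.length_singleton] at hw; omega
    have hQ := convW_consL_antipode k ih v hv
    -- `bumpLast k v` is `0` or a nonempty word of length `≤ n`
    have hbump : conv LinearMap.id antipode (bumpLast k v) = 0 := by
      rcases v.eq_nil_or_concat' with rfl | ⟨v', m, rfl⟩
      · simp [bumpLast]
      · rw [bumpLast_concat, conv_W, ih _ (by simpa using hv)]
        simp [counitW]
    have hB := conv_bumpLast LinearMap.id antipode k v
    rw [convW] at hQ
    rw [hbump] at hB
    simp only [LinearMap.id_apply, LinearMap.comp_apply, consLₗ_apply, antipode_W, antipodeW_nil,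
      harm_nil_right] at hQ hB
    rw [convW_concat]
    simp only [LinearMap.id_apply, antipode_W, antipodeW_concat, antipodeW_nil, harm_sub_right,
      harm_neg_right, Finset.sum_sub_distrib, Finset.sum_neg_distrib, harm_nil_right]
    rw [hQ, counitW, if_neg (by simp)]
    linear_combination (norm := abel) hB

lemma conv_id_antipode : conv LinearMap.id antipode = counit :=
  H1.linearMap_ext fun w => by simp [convW_id_antipode]

lemma convW_id_harm_convW_id (g g' : H1 →ₗ[ℚ] H1) (u v : List ℕ+) :
    convW LinearMap.id g u ∗ convW LinearMap.id g' v =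
      ∑ i ∈ Finset.range (u.length + 1), ∑ j ∈ Finset.range (v.length + 1),
        harmW (u.take i) (v.take j) ∗ (g (W (u.drop i)) ∗ g' (W (v.drop j))) := by
  simp only [convW, harm_sum_left, LinearMap.id_apply]
  refine Finset.sum_congr rfl fun i _ => ?_
  rw [harm_sum_right]
  refine Finset.sum_congr rfl fun j _ => ?_
  rw [harm_harm_harm_comm, harm_W_W]

theorem antipode_harmW (u v : List ℕ+) : antipode (harmW u v) = antipodeW u ∗ antipodeW v := by
  -- `id ⋆ antipode = counit` evaluated on `u ∗ v` in two ways: via `Δ(u ∗ v) = Δu ∗ Δv`, and as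
  -- the product of its values on `u` and `v`; all terms but the leading one agree by induction.
  have h₁ := conv_harmW u v LinearMap.id antipode
  rw [conv_id_antipode, counit_harmW, ← convW_id_antipode u, ← convW_id_antipode v,
    convW_id_harm_convW_id, ← sub_eq_zero, ← Finset.sum_sub_distrib] at h₁
  simp only [← Finset.sum_sub_distrib, LinearMap.id_apply, ← harm_sub_right] at h₁
  rw [← Finset.sum_product', Finset.sum_eq_single_of_mem (0, 0) (by simp)] at h₁
  · simp only [List.take_zero, List.drop_zero, harmW_nil_left, harm_nil_left, antipode_W] at h₁
    exact (sub_eq_zero.mp h₁).symm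
  · rintro ⟨i, j⟩ hij hne
    simp only [Finset.mem_product, Finset.mem_range] at hij
    simp only [ne_eq, Prod.mk.injEq, not_and_or] at hne
    have : u.length - i + (v.length - j) < u.length + v.length := by omega
    rw [antipode_harmW (u.drop i) (v.drop j)]
    simp
termination_by u.length + v.length

lemma antipode_harm (g h : H1) : antipode (g ∗ h) = antipode g ∗ antipode h := by
  induction g using H1.induction_on with
  | zero => simp
  | add g g' hg hg' => simp [hg, hg']
  | smul_W c u =>
    induction h using H1.induction_on with
    | zero => simp
    | add h h' hh hh' => simp only [harm_add_right, map_add, hh, hh']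
    | smul_W d v => simp [antipode_harmW]

noncomputable def sigₗ (m : ℕ) : H1 →ₗ[ℚ] H1 := linearCombination ℚ (sigW m)

@[simp] lemma sigₗ_W (m : ℕ) (w : List ℕ+) : sigₗ m (W w) = sigW m w := linearCombination_W _ w

lemma pplus_zero (k : ℕ+) : pplus k 0 = k := rfl

lemma pplus_one (k : ℕ+) : pplus k 1 = k + 1 := rfl

lemma sigW_zero : ∀ w : List ℕ+, sigW 0 w = W w
  | [] => by simp [sigW]
  | k :: w => by simp [sigW, sigW_zero w, pplus_zero]

lemma sigW_one_nil : sigW 1 [] = 0 := by simp [sigW]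

lemma sigW_one_cons (k : ℕ+) (w : List ℕ+) :
    sigW 1 (k :: w) = consL k (sigW 1 w) + ((k : ℕ) : ℚ) • consL (k + 1) (W w) := by
  rw [sigW, Finset.sum_range_succ, Finset.sum_range_one, sigW_zero, pplus_zero, pplus_one]
  simp

lemma sigₗ_one_consL (a : ℕ+) (h : H1) :
    sigₗ 1 (consL a h) = consL a (sigₗ 1 h) + ((a : ℕ) : ℚ) • consL (a + 1) h := by
  induction h using H1.induction_on with
  | zero => simp
  | add g h hg hh => simp only [consL_add, map_add, hg, hh, smul_add]; abel
  | smul_W c w => simp [sigW_one_cons, smul_comm c]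

theorem sigₗ_one_harmW : ∀ u v : List ℕ+,
    sigₗ 1 (harmW u v) = sigW 1 u ∗ W v + W u ∗ sigW 1 v
  | [], v => by simp [harmW_nil_left, sigW_one_nil]
  | _ :: _, [] => by simp [harmW_nil_right, sigW_one_nil]
  | a :: u, b :: v => by
    rw [harmW_cons_cons, map_add, map_add, sigₗ_one_consL, sigₗ_one_consL, sigₗ_one_consL,
      sigₗ_one_harmW u (b :: v), sigₗ_one_harmW (a :: u) v, sigₗ_one_harmW u v,
      sigW_one_cons a u, sigW_one_cons b v]
    simp only [consL_harm_W_cons, W_cons_harm_consL, harm_add_left, harm_add_right, harm_smul_left,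
      harm_smul_right, consL_add, consL_smul, smul_add, harm_W_W, PNat.add_coe, Nat.cast_add,
      add_smul]
    rw [add_right_comm a 1 b, ← add_assoc a b 1]
    abel
  termination_by u v => u.length + v.length

@[simp] lemma mulRk_W (k : ℕ+) (w : List ℕ+) : mulRk k (W w) = W (w ++ [k]) := by
  simp [mulRk, W, Finsupp.mapDomain_single]

@[simp] lemma mulRk_zero (k : ℕ+) : mulRk k 0 = 0 := Finsupp.mapDomain_zero

@[simp] lemma mulRk_add (k : ℕ+) (g h : H1) : mulRk k (g + h) = mulRk k g + mulRk k h :=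
  Finsupp.mapDomain_add

@[simp] lemma mulRk_smul (k : ℕ+) (c : ℚ) (h : H1) : mulRk k (c • h) = c • mulRk k h :=
  Finsupp.mapDomain_smul c h

lemma mulRk_consL (k a : ℕ+) (h : H1) : mulRk k (consL a h) = consL a (mulRk k h) := by
  simp only [mulRk, consL, ← Finsupp.mapDomain_comp]
  rfl

lemma sigW_one_concat : ∀ (w : List ℕ+) (k : ℕ+),
    sigW 1 (w ++ [k]) = mulRk k (sigW 1 w) + ((k : ℕ) : ℚ) • mulRk (k + 1) (W w)
  | [], k => by simp [sigW_one_cons, sigW_one_nil]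
  | a :: w, k => by
    rw [List.cons_append, sigW_one_cons, sigW_one_concat w k, sigW_one_cons]
    simp only [consL_add, consL_smul, mulRk_add, mulRk_smul, mulRk_consL, consL_W, mulRk_W,
      List.cons_append]
    abel

noncomputable def reverseₗ : H1 →ₗ[ℚ] H1 := Finsupp.lmapDomain ℚ ℚ List.reverse

lemma reverseₗ_W (w : List ℕ+) : reverseₗ (W w) = W w.reverse := by
  simp [reverseₗ, W, Finsupp.mapDomain_single]

lemma reverseₗ_consL (a : ℕ+) (h : H1) : reverseₗ (consL a h) = mulRk a (reverseₗ h) := by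
  simp only [reverseₗ, Finsupp.lmapDomain_apply, consL, mulRk, ← Finsupp.mapDomain_comp]
  congr 1
  funext w
  simp

lemma sigW_one_reverse : ∀ w : List ℕ+, sigW 1 w.reverse = reverseₗ (sigW 1 w)
  | [] => by rw [List.reverse_nil, sigW_one_nil, map_zero]
  | a :: w => by
    rw [List.reverse_cons, sigW_one_concat, sigW_one_reverse w, sigW_one_cons, map_add, map_smul,
      reverseₗ_consL, reverseₗ_consL, reverseₗ_W]

lemma Stt_reverseₗ (h : H1) : Stt (reverseₗ h) = antipode h := by
  rw [Stt, ← Finsupp.linearCombination_apply, reverseₗ, Finsupp.lmapDomain_apply,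
    Finsupp.linearCombination_mapDomain]
  rfl

lemma psiW_eq_convW (w : List ℕ+) : psiW w = convW LinearMap.id (antipode ∘ₗ sigₗ 1) w := by
  rw [psiW, convW, Finset.sum_range_succ, List.drop_length]
  simp only [LinearMap.id_apply, LinearMap.comp_apply, sigₗ_W, sigW_one_nil, map_zero,
    harm_zero_right, add_zero, sigW_one_reverse, Stt_reverseₗ]

lemma psi_eq_conv (h : H1) : psi h = conv LinearMap.id (antipode ∘ₗ sigₗ 1) h := by
  rw [psi, ← Finsupp.linearCombination_apply, conv, funext psiW_eq_convW]

theorem psi_harmW (u v : List ℕ+) :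
    psi (harmW u v) = psiW u ∗ counitW v + counitW u ∗ psiW v := by
  have h₁ := convW_id_harm_convW_id (antipode ∘ₗ sigₗ 1) antipode u v
  have h₂ := convW_id_harm_convW_id antipode (antipode ∘ₗ sigₗ 1) u v
  rw [convW_id_antipode, ← psiW_eq_convW] at h₁ h₂
  rw [psi_eq_conv, conv_harmW, h₁, h₂, ← Finset.sum_add_distrib]
  refine Finset.sum_congr rfl fun i _ => ?_
  rw [← Finset.sum_add_distrib]
  refine Finset.sum_congr rfl fun j _ => ?_
  simp [sigₗ_one_harmW, antipode_harm]

/-- Lemma 7: `ker ψ ⊇ yH ∗ yH`, i.e. `ψ(u ∗ v) = 0` for `u, v ∈ yH`. -/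
theorem psi_harm_eq_zero (u : H1) (hu : u ∈ yH1) (v : H1) (hv : v ∈ yH1) :
    psi (harm u v) = 0 := by
  rw [psi_eq_conv]
  induction hu using Submodule.span_induction with
  | mem x hx =>
    obtain ⟨k, ks, rfl⟩ := hx
    induction hv using Submodule.span_induction with
    | mem y hy =>
      obtain ⟨l, ls, rfl⟩ := hy
      simp [← psi_eq_conv, psi_harmW]
    | zero => simp
    | add y z _ _ hy hz => simp [hy, hz]
    | smul c y _ hy => simp [hy]
  | zero => simp
  | add x y _ _ hx hy => simp [hx, hy]
  | smul c x _ hx => simp [hx]
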